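/- arXiv:1705.05900 — 4 statements merged into one kernel-verified Lean document; each statement's English description precedes it below -/
import Mathlib

section
/- Let k be an algebraically closed field, let R = k[x_1, …, x_n], let f_1, …, f_m ∈ R, let I be the ideal of R generated by f_1, …, f_m, and fix r ≥ 1. Let M ⊆ R be the ideal generated by all r×r minors of the Jacobian matrix (∂f_i/∂x_j), i.e., by all determinants det(∂f_{β(i)}/∂x_{α(j)})_{1 ≤ i, j ≤ r} over all choices of r rows β: {1,…,r} → {1,…,m} and r columns α: {1,…,r} → {1,…,n}. Then for every derivation η ∈ Der_k(R) with η(I) ⊆ I and every such minor Δ = det(∂f_{β(i)}/∂x_{α(j)}), one has η(Δ) ∈ M + I. -/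
/-!
Expand `η (det B)` row by row with the Leibniz rule. On an entry, the commutator of `η` with
`∂ⱼ` gives `η (∂ⱼ f) = ∂ⱼ (η f) - ∑ₗ ∂ⱼ (η xₗ) · ∂ₗ f`. As `η f ∈ I`, writing `η f = ∑ₚ cₚ fₚ`
gives `∂ⱼ (η f) ≡ ∑ₚ cₚ ∂ⱼ fₚ` modulo `I`, so the first terms are, modulo `I`, combinations of
minors in which one row of the Jacobian has been substituted. The correction terms, summed over
the rows, are turned by Cramer's rule into combinations of minors in which one column has been
substituted.
-/

open MvPolynomial

namespace Derivation

section

variable {R A M : Type*} [CommSemiring R] [CommSemiring A] [Algebra R A] [AddCommMonoid M]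
  [Module A M] [Module R M]

theorem sum_apply {ι : Type*} (s : Finset ι) (D : ι → Derivation R A M) (a : A) :
    (∑ i ∈ s, D i) a = ∑ i ∈ s, D i a := by
  rw [← coeFnAddMonoidHom_apply, map_sum, Finset.sum_apply]
  rfl

theorem map_prod (D : Derivation R A M) {ι : Type*} [DecidableEq ι] (s : Finset ι) (g : ι → A) :
    D (∏ i ∈ s, g i) = ∑ i ∈ s, (∏ j ∈ s.erase i, g j) • D (g i) := by
  induction s using Finset.induction_on with
  | empty => simp
  | insert a s ha ih =>
    rw [Finset.prod_insert ha, leibniz, ih, Finset.sum_insert ha, Finset.erase_insert ha,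
      Finset.smul_sum, add_comm]
    congr 1
    refine Finset.sum_congr rfl fun i hi => ?_
    rw [Finset.erase_insert_of_ne (ne_of_mem_of_not_mem hi ha).symm, Finset.prod_insert
      (fun h => ha (Finset.mem_of_mem_erase h)), smul_smul, mul_comm]

end

theorem map_det {R A n : Type*} [CommSemiring R] [CommRing A] [Algebra R A] [Fintype n]
    [DecidableEq n] (D : Derivation R A A) (M : Matrix n n A) :
    D M.det = ∑ i, (M.updateRow i fun j => D (M i j)).det := by
  have det_eq : ∀ N : Matrix n n A,
      N.det = ∑ σ : Equiv.Perm n, (Equiv.Perm.sign σ : ℤ) • ∏ k, N k (σ k) := fun N => by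
    rw [← Matrix.det_transpose, Matrix.det_apply]; rfl
  simp only [det_eq, map_sum, map_zsmul, map_prod, smul_eq_mul, Finset.smul_sum]
  rw [Finset.sum_comm]
  refine Finset.sum_congr rfl fun i _ => Finset.sum_congr rfl fun σ _ => ?_
  rw [← Finset.mul_prod_erase _ _ (Finset.mem_univ i), Matrix.updateRow_self, mul_comm]
  congr 2
  exact Finset.prod_congr rfl fun k hk => by rw [Matrix.updateRow_ne (Finset.ne_of_mem_erase hk)]

end Derivation

namespace Matrix

section Determinant

variable {R n : Type*} [CommRing R] [Fintype n] [DecidableEq n]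

theorem det_updateRow_sum_mul {ι : Type*} (M : Matrix n n R) (i : n) (s : Finset ι)
    (c : ι → R) (w : ι → n → R) :
    (M.updateRow i fun j => ∑ p ∈ s, c p * w p j).det =
      ∑ p ∈ s, c p * (M.updateRow i (w p)).det := by
  have hrow : (fun j => ∑ p ∈ s, c p * w p j) = ∑ p ∈ s, c p • w p := by
    ext j; simp
  rw [hrow]
  exact map_sum (detRowAlternating.toMultilinearMap.toLinearMap M i) _ _ |>.trans
    (Finset.sum_congr rfl fun p _ =>
      map_smul (detRowAlternating.toMultilinearMap.toLinearMap M i) _ _)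

theorem det_updateRow_sub (M : Matrix n n R) (i : n) (v w : n → R) :
    (M.updateRow i (v - w)).det = (M.updateRow i v).det - (M.updateRow i w).det :=
  map_sub (detRowAlternating.toMultilinearMap.toLinearMap M i) v w

theorem det_updateRow_mem_of_forall_mem {J : Ideal R} (M : Matrix n n R) (i : n) {v : n → R}
    (hv : ∀ j, v j ∈ J) : (M.updateRow i v).det ∈ J := by
  have hv_eq : v = fun j => ∑ p, v p * Pi.single (M := fun _ => R) p 1 j := by
    ext j; simp [Pi.single_apply]
  rw [hv_eq, det_updateRow_sum_mul]
  exact Ideal.sum_mem _ fun p _ => Ideal.mul_mem_right _ _ (hv p)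

theorem det_updateRow_sub_det_updateRow_mem {J : Ideal R} (M : Matrix n n R) (i : n)
    {v w : n → R} (h : ∀ j, v j - w j ∈ J) :
    (M.updateRow i v).det - (M.updateRow i w).det ∈ J := by
  rw [← det_updateRow_sub]
  exact det_updateRow_mem_of_forall_mem M i h

/-- Both sides equal `u ⬝ᵥ adjugate M *ᵥ b`. -/
theorem sum_mul_det_updateRow_eq_sum_mul_det_updateCol (M : Matrix n n R) (b u : n → R) :
    ∑ i, b i * (M.updateRow i u).det = ∑ j, u j * (M.updateCol j b).det := by
  simp only [← cramer_transpose_apply, ← cramer_apply, cramer_eq_adjugate_mulVec,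
    ← dotProduct.eq_1]
  rw [← adjugate_transpose, mulVec_transpose, dotProduct_comm, dotProduct_mulVec]

end Determinant

section Minors

variable {R m n : Type*} {r : ℕ}

theorem updateRow_submatrix_eq_submatrix_update (A : Matrix m n R) (α : Fin r → n)
    (β : Fin r → m) (i : Fin r) (p : m) :
    (A.submatrix β α).updateRow i (fun j => A p (α j)) = A.submatrix (Function.update β i p) α := by
  ext i' j
  rcases eq_or_ne i' i with rfl | h
  · simp
  · simp [updateRow_ne h, Function.update_of_ne h]

theorem updateCol_submatrix_eq_submatrix_update (A : Matrix m n R) (α : Fin r → n)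
    (β : Fin r → m) (j : Fin r) (l : n) :
    (A.submatrix β α).updateCol j (fun i => A (β i) l) = A.submatrix β (Function.update α j l) := by
  ext i j'
  rcases eq_or_ne j' j with rfl | h
  · simp
  · simp [updateCol_ne h, Function.update_of_ne h]

variable [CommRing R]

def minorsIdeal (A : Matrix m n R) (r : ℕ) : Ideal R :=
  Ideal.span {q | ∃ (α : Fin r → n) (β : Fin r → m), q = (A.submatrix β α).det}

theorem det_submatrix_mem_minorsIdeal (A : Matrix m n R) (α : Fin r → n) (β : Fin r → m) :
    (A.submatrix β α).det ∈ A.minorsIdeal r :=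
  Ideal.subset_span ⟨α, β, rfl⟩

theorem det_updateRow_submatrix_sum_mul_mem_minorsIdeal [Fintype m] (A : Matrix m n R)
    (α : Fin r → n) (β : Fin r → m) (i : Fin r) (c : m → R) :
    ((A.submatrix β α).updateRow i fun j => ∑ p, c p * A p (α j)).det ∈ A.minorsIdeal r := by
  rw [det_updateRow_sum_mul]
  refine Ideal.sum_mem _ fun p _ => Ideal.mul_mem_left _ _ ?_
  rw [updateRow_submatrix_eq_submatrix_update]
  exact det_submatrix_mem_minorsIdeal _ _ _

theorem sum_det_updateRow_submatrix_mem_minorsIdeal [Fintype n] (A : Matrix m n R)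
    (α : Fin r → n) (β : Fin r → m) (C : Matrix (Fin r) n R) :
    ∑ i, ((A.submatrix β α).updateRow i fun j => ∑ l, C j l * A (β i) l).det ∈
      A.minorsIdeal r := by
  simp only [mul_comm (C _ _), det_updateRow_sum_mul]
  rw [Finset.sum_comm]
  refine Ideal.sum_mem _ fun l _ => ?_
  rw [sum_mul_det_updateRow_eq_sum_mul_det_updateCol]
  refine Ideal.sum_mem _ fun j _ => Ideal.mul_mem_left _ _ ?_
  rw [updateCol_submatrix_eq_submatrix_update]
  exact det_submatrix_mem_minorsIdeal _ _ _

end Minors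

end Matrix

namespace MvPolynomial

variable {R σ ι : Type*} [CommRing R]

noncomputable def jacobian (f : ι → MvPolynomial σ R) : Matrix ι σ (MvPolynomial σ R) :=
  Matrix.of fun i j => pderiv j (f i)

theorem derivation_pderiv_apply [Fintype σ]
    (D : Derivation R (MvPolynomial σ R) (MvPolynomial σ R)) (j : σ) (p : MvPolynomial σ R) :
    D (pderiv j p) = pderiv j (D p) - ∑ l, pderiv j (D (X l)) * pderiv l p := by
  classical
  have hbracket : ⁅D, pderiv j⁆ = -∑ l, pderiv j (D (X l)) • pderiv l :=
    derivation_ext fun i => by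
      rw [Derivation.commutator_apply]
      simp [pderiv_X, Pi.single_apply, apply_ite D, Derivation.sum_apply]
  have h := congr($hbracket p)
  simp only [Derivation.commutator_apply, Derivation.coe_neg, Pi.neg_apply,
    Derivation.sum_apply, Derivation.coe_smul, Pi.smul_apply, smul_eq_mul] at h
  linear_combination h

theorem exists_pderiv_sub_sum_mem_span [Fintype ι] {f : ι → MvPolynomial σ R}
    {g : MvPolynomial σ R} (hg : g ∈ Ideal.span (Set.range f)) :
    ∃ c : ι → MvPolynomial σ R,
      ∀ j, pderiv j g - ∑ p, c p * jacobian f p j ∈ Ideal.span (Set.range f) := by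
  obtain ⟨c, rfl⟩ := Ideal.mem_span_range_iff_exists_fun.mp hg
  refine ⟨c, fun j => ?_⟩
  simp only [jacobian, Matrix.of_apply, map_sum, pderiv_mul, Finset.sum_add_distrib,
    add_sub_cancel_right]
  exact Ideal.sum_mem _ fun p _ => Ideal.mul_mem_left _ _ (Ideal.subset_span ⟨p, rfl⟩)

end MvPolynomial

open Matrix

theorem derivation_maps_jacobian_minor_into_minors_ideal_general
    (k : Type*) [Field k]
    (n m r : ℕ)
    (f : Fin m → MvPolynomial (Fin n) k)
    (η : Derivation k (MvPolynomial (Fin n) k) (MvPolynomial (Fin n) k))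
    (hη : ∀ p ∈ Ideal.span (Set.range f), η p ∈ Ideal.span (Set.range f))
    (α : Fin r → Fin n) (β : Fin r → Fin m) :
    η (Matrix.det (Matrix.of fun i j : Fin r => MvPolynomial.pderiv (α j) (f (β i)))) ∈
      Ideal.span { q : MvPolynomial (Fin n) k |
          ∃ (α' : Fin r → Fin n) (β' : Fin r → Fin m),
            q = Matrix.det (Matrix.of fun i j : Fin r => MvPolynomial.pderiv (α' j) (f (β' i))) }
        ⊔ Ideal.span (Set.range f) := by
  change η ((jacobian f).submatrix β α).det ∈ (jacobian f).minorsIdeal r ⊔ _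
  set B := (jacobian f).submatrix β α
  have hrow : ∀ i, (fun j => η (B i j)) = (fun j => pderiv (α j) (η (f (β i)))) -
      fun j => ∑ l, pderiv (α j) (η (X l)) * jacobian f (β i) l :=
    fun i => funext fun j => derivation_pderiv_apply η (α j) (f (β i))
  rw [Derivation.map_det]
  simp only [hrow, det_updateRow_sub, Finset.sum_sub_distrib]
  refine sub_mem (Ideal.sum_mem _ fun i _ => ?_)
    (Ideal.mem_sup_left (sum_det_updateRow_submatrix_mem_minorsIdeal _ α β _))
  obtain ⟨c, hc⟩ := exists_pderiv_sub_sum_mem_span (hη _ (Ideal.subset_span ⟨β i, rfl⟩))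
  rw [← sub_add_cancel (B.updateRow i _).det
    (B.updateRow i fun j => ∑ p, c p * jacobian f p (α j)).det]
  exact add_mem (Ideal.mem_sup_right (det_updateRow_sub_det_updateRow_mem B i fun j => hc (α j)))
    (Ideal.mem_sup_left (det_updateRow_submatrix_sum_mul_mem_minorsIdeal _ α β i c))

/-- A derivation of the polynomial ring preserving the ideal `I = (f_1, …, f_m)` sends every
`r × r` minor of the Jacobian matrix `(∂f_i/∂x_j)` into `M + I`, where `M` is the ideal
generated by all `r × r` minors of the Jacobian. -/
theorem derivation_maps_jacobian_minor_into_minors_ideal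
    (k : Type*) [Field k] [IsAlgClosed k]
    (n m r : ℕ) (hr : 1 ≤ r)
    (f : Fin m → MvPolynomial (Fin n) k)
    (η : Derivation k (MvPolynomial (Fin n) k) (MvPolynomial (Fin n) k))
    (hη : ∀ p ∈ Ideal.span (Set.range f), η p ∈ Ideal.span (Set.range f))
    (α : Fin r → Fin n) (β : Fin r → Fin m) :
    η (Matrix.det (Matrix.of fun i j : Fin r => MvPolynomial.pderiv (α j) (f (β i)))) ∈
      Ideal.span { q : MvPolynomial (Fin n) k |
          ∃ (α' : Fin r → Fin n) (β' : Fin r → Fin m),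
            q = Matrix.det (Matrix.of fun i j : Fin r => MvPolynomial.pderiv (α' j) (f (β' i))) }
        ⊔ Ideal.span (Set.range f) :=
  derivation_maps_jacobian_minor_into_minors_ideal_general k n m r f η hη α β
end

section
/- Let k be an algebraically closed field of characteristic 0, let h ∈ k[x] be a monic polynomial of odd degree 2m+1 ≥ 3 such that h and its derivative h′ are coprime, and let A = k[x, y]/⟨y² − 2h(x)⟩ be the coordinate ring of the non-singular hyperelliptic curve y² = 2h(x), with x̄, ȳ the images of x, y in A. Then there is a unique derivation τ ∈ Der_k(A) with τ(x̄) = ȳ and τ(ȳ) equal to the image of h′(x), and Der_k(A) is a free A-module of rank 1 generated by τ: every μ ∈ Der_k(A) can be written uniquely as μ = f·τ with f ∈ A. -/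
/-!
Write `A = k[x, y]/(y² - 2h(x))` as `k[x][y]/(y² - 2h)`, a free `k[x]`-module with basis `1, ȳ`.
A derivation `μ` of `A` is determined by `a = μ x̄` and `b = μ ȳ`, and differentiating
`ȳ² = 2h(x̄)` gives `ȳ b = h'(x̄) a`. Writing `a = a₀ + a₁ȳ`, `b = b₀ + b₁ȳ` and comparing
coefficients gives `2h b₁ = h' a₀` and `b₀ = h' a₁`; as `h` and `h'` are coprime, `a₀ = 2h e`, so
`b₁ = h' e` and `f = a₁ + e ȳ` satisfies `a = f ȳ`, `b = f h'`, i.e. `μ = f • τ`. The factor `f` is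
unique because `ȳ` is a non-zero-divisor.
-/

open Polynomial

/-- `simp` rewrites with `Ideal.Quotient.liftₐ_apply` to a term on which `Ideal.Quotient.lift_mk`
does not fire, so the calls below use this lemma instead. -/
@[simp]
theorem Ideal.Quotient.liftₐ_mk {R A B : Type*} [CommRing R] [CommRing A] [Ring B] [Algebra R A]
    [Algebra R B] (I : Ideal A) (f : A →ₐ[R] B) (hI : ∀ a ∈ I, f a = 0) (a : A) :
    Ideal.Quotient.liftₐ I f hI (Ideal.Quotient.mk I a) = f a :=
  rfl

theorem MvPolynomial.quotient_derivation_ext {σ R : Type*} [CommRing R]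
    {I : Ideal (MvPolynomial σ R)} {D₁ D₂ : Derivation R (MvPolynomial σ R ⧸ I) (MvPolynomial σ R ⧸ I)}
    (h : ∀ i, D₁ (Ideal.Quotient.mk I (X i)) = D₂ (Ideal.Quotient.mk I (X i))) : D₁ = D₂ := by
  have : D₁.compAlgebraMap (MvPolynomial σ R) = D₂.compAlgebraMap _ := derivation_ext h
  ext a
  obtain ⟨p, rfl⟩ := Ideal.Quotient.mk_surjective a
  exact congr($this p)

namespace AdjoinRoot

variable {R : Type*} [CommRing R] {c : R}

theorem aeval_of_X {f : R[X][X]} (p : R[X]) : aeval (of f X) p = of f p := by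
  simpa using aeval_algHom_apply (ofAlgHom R f) X p

theorem root_X_pow_two_sub_C_sq (c : R) : root (X ^ 2 - C c) ^ 2 = of _ c := by
  have := mk_self (f := X ^ 2 - C c)
  rwa [map_sub, map_pow, mk_X, mk_C, sub_eq_zero] at this

variable [Nontrivial R]

theorem exists_eq_of_add_of_mul_root (z : AdjoinRoot (X ^ 2 - C c)) :
    ∃ a b : R, z = of _ a + of _ b * root _ := by
  have hq : (X ^ 2 - C c).Monic := monic_X_pow_sub_C c two_ne_zero
  obtain ⟨p, rfl⟩ := mk_surjective z
  have hr : (p %ₘ (X ^ 2 - C c)).degree ≤ 1 := by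
    have := degree_modByMonic_lt p hq
    rw [degree_X_pow_sub_C two_pos] at this
    exact Order.le_of_lt_succ this
  refine ⟨(p %ₘ (X ^ 2 - C c)).coeff 0, (p %ₘ (X ^ 2 - C c)).coeff 1, ?_⟩
  rw [← mk_leftInverse hq (mk _ p), modByMonicHom_mk]
  conv_lhs => rw [eq_X_add_C_of_degree_le_one hr]
  simp only [map_add, map_mul, mk_C, mk_X]
  ring

theorem of_add_of_mul_root_inj {a b a' b' : R} :
    of (X ^ 2 - C c) a + of _ b * root _ = of _ a' + of _ b' * root _ ↔ a = a' ∧ b = b' := by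
  refine ⟨fun h => ?_, by rintro ⟨rfl, rfl⟩; rfl⟩
  have hq : (X ^ 2 - C c).Monic := monic_X_pow_sub_C c two_ne_zero
  have hlin : ∀ a b : R, modByMonicHom hq (of _ a + of _ b * root _) = C b * X + C a := by
    intro a b
    rw [← mk_C, ← mk_C, ← mk_X, ← map_mul, ← map_add, modByMonicHom_mk, add_comm,
      modByMonic_eq_self_iff hq, degree_X_pow_sub_C two_pos]
    exact degree_linear_le.trans_lt (by norm_num)
  have := congrArg (modByMonicHom hq) h
  rw [hlin, hlin] at this
  exact ⟨by simpa using congrArg (coeff · 0) this, by simpa using congrArg (coeff · 1) this⟩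

theorem isLeftRegular_root (hc : IsLeftRegular c) : IsLeftRegular (root (X ^ 2 - C c)) := by
  refine isLeftRegular_iff_right_eq_zero_of_mul.2 fun g hg => ?_
  obtain ⟨g₀, g₁, rfl⟩ := exists_eq_of_add_of_mul_root g
  have : of _ (c * g₁) + of _ g₀ * root _ = of (X ^ 2 - C c) 0 + of _ 0 * root _ := by
    simp only [map_zero, map_mul]
    linear_combination hg - of _ g₁ * root_X_pow_two_sub_C_sq c
  obtain ⟨hg₁, rfl⟩ := (of_add_of_mul_root_inj (c := c)).1 this
  obtain rfl : g₁ = 0 := hc (hg₁.trans (mul_zero c).symm)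
  simp

theorem existsUnique_eq_mul_root_and_eq_mul_of {d : R} (hc : IsLeftRegular c)
    (hcd : IsCoprime c d) {α β : AdjoinRoot (X ^ 2 - C c)} (hαβ : root _ * β = of _ d * α) :
    ∃! f, α = f * root _ ∧ β = f * of _ d := by
  obtain ⟨a₀, a₁, rfl⟩ := exists_eq_of_add_of_mul_root α
  obtain ⟨b₀, b₁, rfl⟩ := exists_eq_of_add_of_mul_root β
  have : of _ (c * b₁) + of _ b₀ * root _ =
      of (X ^ 2 - C c) (d * a₀) + of _ (d * a₁) * root _ := by
    simp only [map_mul]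
    linear_combination hαβ - of _ b₁ * root_X_pow_two_sub_C_sq c
  obtain ⟨hb₁, rfl⟩ := (of_add_of_mul_root_inj (c := c)).1 this
  obtain ⟨e, rfl⟩ : c ∣ a₀ := hcd.dvd_of_dvd_mul_left ⟨b₁, hb₁.symm⟩
  obtain rfl : b₁ = d * e := hc (show c * b₁ = c * (d * e) by rw [hb₁]; ring)
  have hα : of _ (c * e) + of _ a₁ * root _ =
      (of _ a₁ + of _ e * root _) * root (X ^ 2 - C c) := by
    simp only [map_mul]
    linear_combination (-of _ e) * root_X_pow_two_sub_C_sq c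
  refine ⟨of _ a₁ + of _ e * root _, ⟨hα, by simp only [map_mul]; ring⟩, fun g hg => ?_⟩
  exact isLeftRegular_root hc (by dsimp only; rw [mul_comm, ← hg.1, hα, mul_comm])

end AdjoinRoot

namespace Hyperelliptic

section CommRing

variable {R : Type*} [CommRing R] (h : R[X])

noncomputable abbrev curveIdeal : Ideal (MvPolynomial (Fin 2) R) :=
  Ideal.span {MvPolynomial.X 1 ^ 2 - 2 * aeval (MvPolynomial.X 0) h}

local notation "𝒪" => MvPolynomial (Fin 2) R ⧸ curveIdeal h
local notation "x̄" => Ideal.Quotient.mk (curveIdeal h) (MvPolynomial.X 0)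
local notation "ȳ" => Ideal.Quotient.mk (curveIdeal h) (MvPolynomial.X 1)

theorem mk_aeval_X_zero (p : R[X]) :
    Ideal.Quotient.mk (curveIdeal h) (aeval (MvPolynomial.X 0) p) = aeval x̄ p :=
  (aeval_algHom_apply (Ideal.Quotient.mkₐ R (curveIdeal h)) _ p).symm

theorem y_sq : ȳ ^ 2 = aeval x̄ (2 * h) := by
  rw [← mk_aeval_X_zero, ← map_pow, ← sub_eq_zero, ← map_sub, Ideal.Quotient.eq_zero_iff_mem,
    map_mul, map_ofNat]
  exact Ideal.subset_span (by simp)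

noncomputable def toAdjoinRoot : 𝒪 ≃ₐ[R] AdjoinRoot (X ^ 2 - C (2 * h)) :=
  AlgEquiv.ofAlgHom
    (Ideal.Quotient.liftₐ _ (MvPolynomial.aeval ![AdjoinRoot.of _ X, AdjoinRoot.root _]) <| by
      intro a ha
      obtain ⟨b, rfl⟩ := Ideal.mem_span_singleton'.1 ha
      simp [← aeval_algHom_apply, AdjoinRoot.aeval_of_X, AdjoinRoot.root_X_pow_two_sub_C_sq,
        map_ofNat])
    (AdjoinRoot.liftAlgHom _ (aeval x̄) ȳ <| by simp [y_sq])
    (by ext <;> simp [-Ideal.Quotient.liftₐ_apply])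
    (Ideal.Quotient.algHom_ext R <| MvPolynomial.algHom_ext fun i => by
      fin_cases i <;> simp [-Ideal.Quotient.liftₐ_apply])

theorem toAdjoinRoot_mk_aeval (p : R[X]) :
    toAdjoinRoot h (Ideal.Quotient.mk _ (aeval (MvPolynomial.X 0) p)) = AdjoinRoot.of _ p := by
  simp [toAdjoinRoot, -Ideal.Quotient.liftₐ_apply, ← aeval_algHom_apply, AdjoinRoot.aeval_of_X]

theorem toAdjoinRoot_y : toAdjoinRoot h ȳ = AdjoinRoot.root _ := by
  simp [toAdjoinRoot, -Ideal.Quotient.liftₐ_apply]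

/-- The Hamiltonian vector field `y ∂/∂x + h'(x) ∂/∂y` of `y²/2 - h(x)`, which is therefore
tangent to the curve. -/
noncomputable def hamiltonianDerivation :
    Derivation R (MvPolynomial (Fin 2) R) (MvPolynomial (Fin 2) R) :=
  MvPolynomial.mkDerivation R ![MvPolynomial.X 1, aeval (MvPolynomial.X 0) (derivative h)]

theorem hamiltonianDerivation_X_zero :
    hamiltonianDerivation h (MvPolynomial.X 0) = MvPolynomial.X 1 := by
  simp [hamiltonianDerivation]

theorem hamiltonianDerivation_X_one :
    hamiltonianDerivation h (MvPolynomial.X 1) = aeval (MvPolynomial.X 0) (derivative h) := by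
  simp [hamiltonianDerivation]

theorem hamiltonianDerivation_generator_eq_zero :
    hamiltonianDerivation h (MvPolynomial.X 1 ^ 2 - 2 * aeval (MvPolynomial.X 0) h) = 0 := by
  have h2 : hamiltonianDerivation h 2 = 0 := by
    exact_mod_cast (hamiltonianDerivation h).map_natCast 2
  simp only [map_sub, Derivation.leibniz_pow, Derivation.leibniz, Derivation.map_aeval,
    hamiltonianDerivation_X_zero, hamiltonianDerivation_X_one, h2, Nat.add_one_sub_one, pow_one,
    smul_eq_mul, nsmul_eq_mul, Nat.cast_ofNat, mul_zero, add_zero]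
  ring

theorem hamiltonianDerivation_mem {a : MvPolynomial (Fin 2) R} (ha : a ∈ curveIdeal h) :
    hamiltonianDerivation h a ∈ curveIdeal h := by
  obtain ⟨b, rfl⟩ := Ideal.mem_span_singleton'.1 ha
  rw [Derivation.leibniz, hamiltonianDerivation_generator_eq_zero, smul_zero, zero_add,
    smul_eq_mul]
  exact Ideal.mul_mem_right _ _ (Ideal.subset_span rfl)

theorem mkₐ_hamiltonianDerivation_eq_zero {a : MvPolynomial (Fin 2) R}
    (ha : Ideal.Quotient.mkₐ R (curveIdeal h) a = 0) :
    Ideal.Quotient.mkₐ R (curveIdeal h) (hamiltonianDerivation h a) = 0 := by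
  rw [Ideal.Quotient.mkₐ_eq_mk, Ideal.Quotient.eq_zero_iff_mem] at ha ⊢
  exact hamiltonianDerivation_mem h ha

noncomputable def tau : Derivation R 𝒪 𝒪 :=
  Derivation.liftOfSurjective (Ideal.Quotient.mkₐ_surjective R (curveIdeal h))
    (d := hamiltonianDerivation h) fun _ => mkₐ_hamiltonianDerivation_eq_zero h

theorem tau_mk (p : MvPolynomial (Fin 2) R) :
    tau h (Ideal.Quotient.mk _ p) = Ideal.Quotient.mk _ (hamiltonianDerivation h p) :=
  Derivation.liftOfSurjective_apply _ (fun _ => mkₐ_hamiltonianDerivation_eq_zero h) p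

theorem tau_x : tau h x̄ = ȳ := by
  rw [tau_mk, hamiltonianDerivation_X_zero]

theorem tau_y : tau h ȳ = Ideal.Quotient.mk _ (aeval (MvPolynomial.X 0) (derivative h)) := by
  rw [tau_mk, hamiltonianDerivation_X_one]

end CommRing

section Field

variable {k : Type*} [Field k] (h : k[X])

local notation "𝒪" => MvPolynomial (Fin 2) k ⧸ curveIdeal h
local notation "x̄" => Ideal.Quotient.mk (curveIdeal h) (MvPolynomial.X 0)
local notation "ȳ" => Ideal.Quotient.mk (curveIdeal h) (MvPolynomial.X 1)
local notation "h'" => Ideal.Quotient.mk (curveIdeal h) (aeval (MvPolynomial.X 0) (derivative h))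

theorem y_mul_apply_y [NeZero (2 : k)] (μ : Derivation k 𝒪 𝒪) : ȳ * μ ȳ = h' * μ x̄ := by
  have h2 : IsUnit (2 : 𝒪) := by
    rw [← map_ofNat (algebraMap k 𝒪) 2]
    exact (IsUnit.mk0 (2 : k) two_ne_zero).map _
  have := congrArg μ (y_sq h)
  rw [Derivation.leibniz_pow, Derivation.map_aeval] at this
  rw [mk_aeval_X_zero]
  refine h2.mul_left_cancel ?_
  simpa [mul_assoc, map_ofNat] using this

theorem existsUnique_eq_mul_y_and_eq_mul [NeZero (2 : k)] (hcop : IsCoprime h (derivative h))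
    {a b : 𝒪} (hab : ȳ * b = h' * a) : ∃! f : 𝒪, a = f * ȳ ∧ b = f * h' := by
  have h2 : IsUnit (2 : k[X]) := by
    rw [← C_ofNat]
    exact isUnit_C.2 (IsUnit.mk0 2 two_ne_zero)
  have hh : h ≠ 0 := by
    rintro rfl
    rw [derivative_zero, isCoprime_zero_left] at hcop
    exact not_isUnit_zero hcop
  have hreg : IsLeftRegular (2 * h) := (IsRegular.of_ne_zero (mul_ne_zero h2.ne_zero hh)).left
  have hcd : IsCoprime (2 * h) (derivative h) := (isCoprime_mul_unit_left_left h2 _ _).2 hcop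
  set e := toAdjoinRoot h
  have hαβ : AdjoinRoot.root _ * e b = AdjoinRoot.of _ (derivative h) * e a := by
    simpa [e, toAdjoinRoot_y, toAdjoinRoot_mk_aeval] using congrArg e hab
  refine (e.toEquiv.existsUnique_congr fun f => ?_).2
    (AdjoinRoot.existsUnique_eq_mul_root_and_eq_mul_of hreg hcd hαβ)
  simp [← e.injective.eq_iff, e, toAdjoinRoot_y, toAdjoinRoot_mk_aeval]

theorem eq_smul_tau_iff (μ : Derivation k 𝒪 𝒪) (f : 𝒪) :
    μ = f • tau h ↔ μ x̄ = f * ȳ ∧ μ ȳ = f * h' := by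
  refine ⟨?_, fun hμ => MvPolynomial.quotient_derivation_ext (Fin.forall_fin_two.2 ⟨?_, ?_⟩)⟩
  · rintro rfl
    simp [tau_x, tau_y]
  · simp [hμ, tau_x]
  · simp [hμ, tau_y]

end Field

end Hyperelliptic

open Hyperelliptic

theorem hyperelliptic_derivations_free_of_rank_one_general
    (k : Type*) [Field k] [CharZero k]
    (h : Polynomial k)
    (hcop : IsCoprime h (Polynomial.derivative h))
    (I : Ideal (MvPolynomial (Fin 2) k))
    (hI : I = Ideal.span {MvPolynomial.X 1 ^ 2 -
      2 * Polynomial.aeval (MvPolynomial.X 0) h}) :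
    ∃ τ : Derivation k (MvPolynomial (Fin 2) k ⧸ I) (MvPolynomial (Fin 2) k ⧸ I),
      (τ (Ideal.Quotient.mk I (MvPolynomial.X 0)) = Ideal.Quotient.mk I (MvPolynomial.X 1) ∧
        τ (Ideal.Quotient.mk I (MvPolynomial.X 1)) =
          Ideal.Quotient.mk I (Polynomial.aeval (MvPolynomial.X 0) (Polynomial.derivative h))) ∧
      (∀ τ' : Derivation k (MvPolynomial (Fin 2) k ⧸ I) (MvPolynomial (Fin 2) k ⧸ I),
        (τ' (Ideal.Quotient.mk I (MvPolynomial.X 0)) = Ideal.Quotient.mk I (MvPolynomial.X 1) ∧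
          τ' (Ideal.Quotient.mk I (MvPolynomial.X 1)) =
            Ideal.Quotient.mk I (Polynomial.aeval (MvPolynomial.X 0) (Polynomial.derivative h)))
        → τ' = τ) ∧
      ∀ μ : Derivation k (MvPolynomial (Fin 2) k ⧸ I) (MvPolynomial (Fin 2) k ⧸ I),
        ∃! f : MvPolynomial (Fin 2) k ⧸ I, μ = f • τ := by
  obtain rfl : I = curveIdeal h := hI
  refine ⟨tau h, ⟨tau_x h, tau_y h⟩, fun τ' ⟨hx, hy⟩ => ?_, fun μ => ?_⟩
  · exact MvPolynomial.quotient_derivation_ext <|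
      Fin.forall_fin_two.2 ⟨hx.trans (tau_x h).symm, hy.trans (tau_y h).symm⟩
  · simpa only [eq_smul_tau_iff] using existsUnique_eq_mul_y_and_eq_mul h hcop (y_mul_apply_y h μ)

/-- For a non-singular hyperelliptic curve `y² = 2h(x)` (with `h` monic of odd degree
`2m+1 ≥ 3` and `gcd(h, h') = 1`), the Lie algebra of vector fields on the curve is a free
module of rank 1 over the coordinate ring, generated by `τ = y ∂/∂x + h'(x) ∂/∂y`. -/
theorem hyperelliptic_derivations_free_of_rank_one
    (k : Type*) [Field k] [IsAlgClosed k] [CharZero k]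
    (m : ℕ) (hm : 1 ≤ m)
    (h : Polynomial k) (hmonic : h.Monic) (hdeg : h.natDegree = 2 * m + 1)
    (hcop : IsCoprime h (Polynomial.derivative h))
    (I : Ideal (MvPolynomial (Fin 2) k))
    (hI : I = Ideal.span {MvPolynomial.X 1 ^ 2 -
      2 * Polynomial.aeval (MvPolynomial.X 0) h}) :
    ∃ τ : Derivation k (MvPolynomial (Fin 2) k ⧸ I) (MvPolynomial (Fin 2) k ⧸ I),
      (τ (Ideal.Quotient.mk I (MvPolynomial.X 0)) = Ideal.Quotient.mk I (MvPolynomial.X 1) ∧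
        τ (Ideal.Quotient.mk I (MvPolynomial.X 1)) =
          Ideal.Quotient.mk I (Polynomial.aeval (MvPolynomial.X 0) (Polynomial.derivative h))) ∧
      (∀ τ' : Derivation k (MvPolynomial (Fin 2) k ⧸ I) (MvPolynomial (Fin 2) k ⧸ I),
        (τ' (Ideal.Quotient.mk I (MvPolynomial.X 0)) = Ideal.Quotient.mk I (MvPolynomial.X 1) ∧
          τ' (Ideal.Quotient.mk I (MvPolynomial.X 1)) =
            Ideal.Quotient.mk I (Polynomial.aeval (MvPolynomial.X 0) (Polynomial.derivative h)))
        → τ' = τ) ∧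
      ∀ μ : Derivation k (MvPolynomial (Fin 2) k ⧸ I) (MvPolynomial (Fin 2) k ⧸ I),
        ∃! f : MvPolynomial (Fin 2) k ⧸ I, μ = f • τ :=
  hyperelliptic_derivations_free_of_rank_one_general k h hcop I hI
end

section
/- Let k be an algebraically closed field of characteristic 0 and let A be a finitely generated commutative Hopf algebra over k (the coordinate ring of a linear algebraic group G over k), with comultiplication Δ: A → A ⊗_k A. Let L be the k-subspace of left-invariant derivations, L = { η ∈ Der_k(A) | Δ ∘ η = (id_A ⊗ η) ∘ Δ }. Then the A-module map A ⊗_k L → Der_k(A) sending f ⊗ η to f·η is bijective; that is, Der_k(A) is a free A-module generated by the left-invariant vector fields. -/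
open TensorProduct

/-- The space of left-invariant derivations (left-invariant vector fields) on a commutative
Hopf algebra `A`: derivations `η` with `Δ ∘ η = (id ⊗ η) ∘ Δ`. -/
def leftInvariantDerivations (k A : Type*) [CommRing k] [CommRing A] [HopfAlgebra k A] :
    Submodule k (Derivation k A A) where
  carrier := {η | (Coalgebra.comul (R := k) (A := A)) ∘ₗ η.toLinearMap =
    (TensorProduct.map LinearMap.id η.toLinearMap) ∘ₗ Coalgebra.comul}
  add_mem' := by
    intro a b ha hb
    simp only [Set.mem_setOf_eq] at ha hb ⊢
    have hab : (a + b).toLinearMap = a.toLinearMap + b.toLinearMap := rfl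
    rw [hab, TensorProduct.map_add_right, LinearMap.comp_add, LinearMap.add_comp, ha, hb]
  zero_mem' := by
    simp only [Set.mem_setOf_eq]
    have h0 : (0 : Derivation k A A).toLinearMap = 0 := rfl
    rw [h0, TensorProduct.map_zero_right, LinearMap.comp_zero, LinearMap.zero_comp]
  smul_mem' := by
    intro c a ha
    simp only [Set.mem_setOf_eq] at ha ⊢
    have hca : (c • a).toLinearMap = c • a.toLinearMap := rfl
    rw [hca, TensorProduct.map_smul_right, LinearMap.comp_smul, LinearMap.smul_comp, ha]

/-- The canonical map `A ⊗ₖ L → Der_k(A)`, `f ⊗ η ↦ f·η`, where `L` is the space of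
left-invariant derivations. -/
noncomputable def leftInvariantEval (k A : Type*) [CommRing k] [CommRing A]
    [HopfAlgebra k A] :
    A ⊗[k] (leftInvariantDerivations k A) →ₗ[k] Derivation k A A :=
  TensorProduct.lift
    { toFun := fun f =>
        { toFun := fun η => f • (η : Derivation k A A)
          map_add' := fun x y => by simp [smul_add]
          map_smul' := fun c x => by simp [smul_comm c f] }
      map_add' := fun f g => by
        ext x
        simp [add_smul]
      map_smul' := fun c f => by
        ext x
        simp [smul_assoc] }

/-!
Convolution with the antipode turns a derivation `D` of `A` into `S ⋆ D`, which satisfies the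
Leibniz rule at the counit, `θ (a * b) = ε a • θ b + ε b • θ a`; conversely `id ⋆ θ` is a
derivation for every such `θ`, and `S` is the convolution inverse of `id`. Such `θ` are the linear
maps out of `V = 𝔪/𝔪²`, `𝔪 = ker ε`, so `Der_k(A) ≅ Hom_k(V, A)`. In the same way the
left-invariant derivations are identified with `V^*`, because left invariance of `η` says exactly
that `S ⋆ η = ε ∘ η`. Hence `S ⋆ (f • η) = (ε ∘ η) • f`, and the evaluation map becomes the
isomorphism `A ⊗ V^* ≅ Hom_k(V, A)`, valid since `V` is finite-dimensional when `A` is finitely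
generated.
-/

open Coalgebra HopfAlgebra WithConv

section CounitDerivation

variable {k A M N : Type*} [CommRing k] [CommRing A] [Bialgebra k A]
  [AddCommGroup M] [Module k M] [AddCommGroup N] [Module k N]

def IsCounitDerivation (θ : A →ₗ[k] M) : Prop :=
  ∀ a b, θ (a * b) = counit (R := k) a • θ b + counit (R := k) b • θ a

variable (k A) in
def counitDerivationRelations : Submodule k A :=
  Submodule.span k <| Set.range fun p : A × A ↦
    p.1 * p.2 - counit (R := k) p.1 • p.2 - counit (R := k) p.2 • p.1

variable (k A) in
/-- `A ⧸ counitDerivationRelations k A ≅ 𝔪/𝔪²` for `𝔪 = ker ε`: the cotangent space of the group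
at the identity. -/
abbrev CotangentAtOne : Type _ := A ⧸ counitDerivationRelations k A

lemma isCounitDerivation_iff_le_ker {θ : A →ₗ[k] M} :
    IsCounitDerivation θ ↔ counitDerivationRelations k A ≤ LinearMap.ker θ := by
  simp only [counitDerivationRelations, Submodule.span_le, Set.range_subset_iff,
    SetLike.mem_coe, LinearMap.mem_ker, map_sub, sub_sub, sub_eq_zero, Prod.forall,
    IsCounitDerivation, map_add, map_smul]

lemma IsCounitDerivation.comp {θ : A →ₗ[k] M} (hθ : IsCounitDerivation θ) (f : M →ₗ[k] N) :
    IsCounitDerivation (f ∘ₗ θ) := fun a b ↦ by simp [hθ a b]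

lemma isCounitDerivation_mkQ : IsCounitDerivation (counitDerivationRelations k A).mkQ :=
  isCounitDerivation_iff_le_ker.mpr (Submodule.ker_mkQ _).ge

lemma isCounitDerivation_counit_comp (D : Derivation k A A) :
    IsCounitDerivation (counit (R := k) ∘ₗ D.toLinearMap) := fun a b ↦ by
  simp [Bialgebra.counit_mul]

instance [Algebra.FiniteType k A] : Module.Finite k (CotangentAtOne k A) := by
  classical
  obtain ⟨s, hs⟩ := Algebra.FiniteType.out (R := k) (A := A)
  let W := counitDerivationRelations k A
  refine ⟨⟨s.image W.mkQ, eq_top_iff.mpr ?_⟩⟩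
  rintro x -
  obtain ⟨a, rfl⟩ := W.mkQ_surjective x
  induction (hs ▸ Algebra.mem_top : a ∈ Algebra.adjoin k (s : Set A)) using
    Algebra.adjoin_induction with
  | mem x hx => exact Submodule.subset_span (Finset.mem_coe.mpr (Finset.mem_image_of_mem _ hx))
  | algebraMap r =>
    have h1 : W.mkQ 1 = 0 := by simpa using isCounitDerivation_mkQ (k := k) (1 : A) 1
    simp [Algebra.algebraMap_eq_smul_one, h1]
  | add x y _ _ hx hy => simpa using add_mem hx hy
  | mul x y _ _ hx hy =>
    rw [isCounitDerivation_mkQ x y]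
    exact add_mem (Submodule.smul_mem _ _ hy) (Submodule.smul_mem _ _ hx)

end CounitDerivation

section Convolution

variable {k A : Type*} [CommRing k] [CommRing A]

local notation "𝑰" => toConv (LinearMap.id : A →ₗ[k] A)

section Bialgebra

variable [Bialgebra k A]

lemma convMul_mul_of_leibniz (g : A →ₐ[k] A) {φ θ : A →ₗ[k] A}
    (hθ : ∀ a b, θ (a * b) = φ a * θ b + φ b * θ a) (a b : A) :
    (toConv g.toLinearMap * toConv θ) (a * b) =
      (toConv g.toLinearMap * toConv φ) a * (toConv g.toLinearMap * toConv θ) b +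
        (toConv g.toLinearMap * toConv φ) b * (toConv g.toLinearMap * toConv θ) a := by
  rw [((ℛ k a).mul (ℛ k b)).convMul_apply, (ℛ k a).convMul_apply, (ℛ k a).convMul_apply,
    (ℛ k b).convMul_apply, (ℛ k b).convMul_apply, Finset.sum_mul_sum, Finset.sum_mul_sum,
    Finset.sum_comm (s := (ℛ k b).index), ← Finset.sum_product', ← Finset.sum_product',
    ← Finset.sum_add_distrib]
  refine Finset.sum_congr rfl fun p _ ↦ ?_
  simp only [Coalgebra.Repr.mul_left, Coalgebra.Repr.mul_right, AlgHom.toLinearMap_apply,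
    map_mul, hθ]
  ring

noncomputable def IsCounitDerivation.toDerivation {θ : A →ₗ[k] A} (hθ : IsCounitDerivation θ) :
    Derivation k A A :=
  Derivation.mk' (𝑰 * toConv θ).ofConv fun a b ↦ by
    have hθ' : ∀ a b, θ (a * b) = Algebra.linearMap k A (counit a) * θ b +
        Algebra.linearMap k A (counit b) * θ a := fun a b ↦ by simp [hθ a b, Algebra.smul_def]
    have h := convMul_mul_of_leibniz (AlgHom.id k A) (φ := Algebra.linearMap k A ∘ₗ counit) hθ' a b
    rw [← LinearMap.convOne_def, mul_one] at h
    simpa using h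

lemma IsCounitDerivation.toDerivation_apply {θ : A →ₗ[k] A} (hθ : IsCounitDerivation θ) (a : A) :
    hθ.toDerivation a = (𝑰 * toConv θ) a :=
  rfl

lemma IsCounitDerivation.toLinearMap_toDerivation {θ : A →ₗ[k] A} (hθ : IsCounitDerivation θ) :
    hθ.toDerivation.toLinearMap = (𝑰 * toConv θ).ofConv :=
  rfl

lemma convMul_of_comul_comp (g : A →ₗ[k] A) {φ : A →ₗ[k] A}
    (hφ : comul ∘ₗ φ = TensorProduct.map LinearMap.id φ ∘ₗ comul) :
    toConv g * toConv φ = toConv ((toConv g * 𝑰).ofConv ∘ₗ φ) := by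
  rw [LinearMap.convMul_def, LinearMap.convMul_def, ← LinearMap.comp_id g,
    ← LinearMap.id_comp φ, TensorProduct.map_comp]
  simp only [LinearMap.comp_assoc, LinearMap.comp_id, LinearMap.id_comp, hφ]

lemma id_convMul_algebraMap_comp_apply (c : A →ₗ[k] k) {a : A} {ι : Type*} (r : Repr k a ι) :
    (𝑰 * toConv (Algebra.linearMap k A ∘ₗ c)) a = ∑ i ∈ r.index, c (r.right i) • r.left i := by
  simp [r.convMul_apply, Algebra.smul_def, mul_comm]

lemma counit_comp_id_convMul_algebraMap_comp (c : A →ₗ[k] k) :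
    counit ∘ₗ (𝑰 * toConv (Algebra.linearMap k A ∘ₗ c)).ofConv = c := by
  ext a
  rw [LinearMap.comp_apply, id_convMul_algebraMap_comp_apply c (ℛ k a), map_sum]
  simp_rw [map_smul, smul_eq_mul, mul_comm (c _), ← smul_eq_mul, ← map_smul, ← map_sum,
    sum_counit_smul]

lemma comul_comp_id_convMul_algebraMap_comp (c : A →ₗ[k] k) :
    comul ∘ₗ (𝑰 * toConv (Algebra.linearMap k A ∘ₗ c)).ofConv =
      TensorProduct.map LinearMap.id (𝑰 * toConv (Algebra.linearMap k A ∘ₗ c)).ofConv ∘ₗ comul := by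
  ext a
  let r := ℛ k a
  have coassoc := congr(LinearMap.lTensor A
      ((TensorProduct.rid k A).toLinearMap ∘ₗ LinearMap.lTensor A c)
    $(sum_tmul_tmul_eq r (fun i ↦ ℛ k (r.left i)) (fun i ↦ ℛ k (r.right i))))
  simp only [map_sum, LinearMap.lTensor_tmul, LinearMap.comp_apply, LinearEquiv.coe_coe,
    TensorProduct.rid_tmul] at coassoc
  calc comul ((𝑰 * toConv (Algebra.linearMap k A ∘ₗ c)) a)
      = ∑ i ∈ r.index, ∑ j ∈ (ℛ k (r.left i)).index,
          (ℛ k (r.left i)).left j ⊗ₜ (c (r.right i) • (ℛ k (r.left i)).right j) := by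
        rw [id_convMul_algebraMap_comp_apply c r, map_sum]
        refine Finset.sum_congr rfl fun i _ ↦ ?_
        simp only [map_smul, ← (ℛ k (r.left i)).eq, Finset.smul_sum, TensorProduct.tmul_smul]
    _ = ∑ i ∈ r.index, ∑ j ∈ (ℛ k (r.right i)).index,
          r.left i ⊗ₜ (c ((ℛ k (r.right i)).right j) • (ℛ k (r.right i)).left j) := coassoc
    _ = _ := by
        simp only [LinearMap.comp_apply, ← r.eq, map_sum, TensorProduct.map_tmul,
          LinearMap.id_apply, id_convMul_algebraMap_comp_apply c (ℛ k _), TensorProduct.tmul_sum]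

end Bialgebra

section HopfAlgebra

variable [HopfAlgebra k A]

local notation "𝑺" => toConv (antipode k : A →ₗ[k] A)

lemma isCounitDerivation_antipode_convMul (D : Derivation k A A) :
    IsCounitDerivation (𝑺 * toConv D.toLinearMap).ofConv := fun a b ↦ by
  have hD : ∀ a b, D (a * b) =
      (LinearMap.id : A →ₗ[k] A) a * D b + (LinearMap.id : A →ₗ[k] A) b * D a :=
    fun a b ↦ by simp [D.leibniz]
  have h := convMul_mul_of_leibniz (antipodeAlgHom k A) hD a b
  simp only [toLinearMap_antipodeAlgHom, LinearMap.antipode_mul_id, LinearMap.convOne_apply] at h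
  simpa [Algebra.smul_def] using h

lemma mem_leftInvariantDerivations_iff {η : Derivation k A A} :
    η ∈ leftInvariantDerivations k A ↔
      comul ∘ₗ η.toLinearMap = TensorProduct.map LinearMap.id η.toLinearMap ∘ₗ comul :=
  Iff.rfl

lemma antipode_convMul_of_mem {η : Derivation k A A} (hη : η ∈ leftInvariantDerivations k A) :
    𝑺 * toConv η.toLinearMap = toConv (Algebra.linearMap k A ∘ₗ counit ∘ₗ η.toLinearMap) := by
  rw [convMul_of_comul_comp _ hη, LinearMap.antipode_mul_id, LinearMap.convOne_def,
    ofConv_toConv, LinearMap.comp_assoc]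

lemma antipode_convMul_smul_apply {η : Derivation k A A}
    (hη : η ∈ leftInvariantDerivations k A) (f a : A) :
    (𝑺 * toConv (f • η).toLinearMap) a = counit (R := k) (η a) • f := by
  rw [Derivation.coe_smul_linearMap, toConv_smul, mul_smul_comm, antipode_convMul_of_mem hη,
    ofConv_smul, LinearMap.smul_apply]
  simp [Algebra.smul_def, mul_comm]

variable (k A) in
noncomputable def derivationEquivCotangentHom :
    Derivation k A A ≃ₗ[k] (CotangentAtOne k A →ₗ[k] A) where
  toFun D := (counitDerivationRelations k A).liftQ (𝑺 * toConv D.toLinearMap).ofConv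
    (isCounitDerivation_iff_le_ker.mp (isCounitDerivation_antipode_convMul D))
  map_add' D E := by
    ext
    simp [mul_add]
  map_smul' c D := by
    ext
    simp
  invFun g := (isCounitDerivation_mkQ.comp g).toDerivation
  left_inv D := by
    ext a
    rw [IsCounitDerivation.toDerivation_apply, Submodule.liftQ_mkQ, toConv_ofConv, ← mul_assoc,
      LinearMap.id_mul_antipode, one_mul]
    rfl
  right_inv g := by
    ext a
    rw [LinearMap.comp_apply, Submodule.mkQ_apply, Submodule.liftQ_apply,
      IsCounitDerivation.toLinearMap_toDerivation, toConv_ofConv, ← mul_assoc,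
      LinearMap.antipode_mul_id, one_mul]

variable (k A) in
noncomputable def leftInvariantDerivationsEquivDual :
    leftInvariantDerivations k A ≃ₗ[k] Module.Dual k (CotangentAtOne k A) where
  toFun η := (counitDerivationRelations k A).liftQ _
    (isCounitDerivation_iff_le_ker.mp (isCounitDerivation_counit_comp η.1))
  map_add' η η' := by
    ext
    simp
  map_smul' c η := by
    ext
    simp
  invFun c := ⟨((isCounitDerivation_mkQ.comp c).comp (Algebra.linearMap k A)).toDerivation, by
    rw [mem_leftInvariantDerivations_iff, IsCounitDerivation.toLinearMap_toDerivation]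
    exact comul_comp_id_convMul_algebraMap_comp _⟩
  left_inv η := by
    ext a
    simp only [IsCounitDerivation.toDerivation_apply, Submodule.liftQ_mkQ,
      ← antipode_convMul_of_mem η.2, ← mul_assoc, LinearMap.id_mul_antipode, one_mul]
    rfl
  right_inv c := by
    ext a
    exact congr($(counit_comp_id_convMul_algebraMap_comp (c ∘ₗ Submodule.mkQ _)) a)

lemma derivationEquivCotangentHom_smul (f : A) (η : leftInvariantDerivations k A) :
    derivationEquivCotangentHom k A (f • (η : Derivation k A A)) =
      dualTensorHom k (CotangentAtOne k A) A (leftInvariantDerivationsEquivDual k A η ⊗ₜ f) := by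
  ext a
  exact antipode_convMul_smul_apply η.2 f a

end HopfAlgebra

end Convolution

theorem derivations_free_over_left_invariant_general
    (k : Type*) [Field k]
    (A : Type*) [CommRing A] [HopfAlgebra k A] [Algebra.FiniteType k A] :
    Function.Bijective (leftInvariantEval k A) := by
  let e := LinearEquiv.lTensor A (leftInvariantDerivationsEquivDual k A) ≪≫ₗ
    TensorProduct.comm k A _ ≪≫ₗ dualTensorHomEquiv k (CotangentAtOne k A) A ≪≫ₗ
    (derivationEquivCotangentHom k A).symm
  have he : e.toLinearMap = leftInvariantEval k A := TensorProduct.ext' fun f η ↦ by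
    apply (derivationEquivCotangentHom k A).injective
    simp [e, derivationEquivCotangentHom_smul, leftInvariantEval]
  exact he ▸ e.bijective

/-- The Lie algebra of vector fields on a linear algebraic group is a free module over the
coordinate ring, generated by the left-invariant vector fields: the evaluation map
`A ⊗ₖ L → Der_k(A)`, `f ⊗ η ↦ f·η`, is bijective. -/
theorem derivations_free_over_left_invariant
    (k : Type*) [Field k] [IsAlgClosed k] [CharZero k]
    (A : Type*) [CommRing A] [HopfAlgebra k A] [Algebra.FiniteType k A] :
    Function.Bijective (leftInvariantEval k A) :=
  derivations_free_over_left_invariant_general k A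
end

section
/- Let k be a field and let A be a commutative Hopf algebra over k with comultiplication Δ: A → A ⊗_k A. If η ∈ Der_k(A) is left-invariant, i.e., Δ ∘ η = (id_A ⊗ η) ∘ Δ, and μ ∈ Der_k(A) is right-invariant, i.e., Δ ∘ μ = (μ ⊗ id_A) ∘ Δ, then η and μ commute: [η, μ] = 0. -/
/-- On a commutative Hopf algebra, a left-invariant derivation commutes with a
right-invariant derivation. -/
theorem left_invariant_commutes_with_right_invariant
    (k : Type*) [Field k] (A : Type*) [CommRing A] [HopfAlgebra k A]
    (η μ : Derivation k A A)
    (hη : (Coalgebra.comul (R := k) (A := A)) ∘ₗ η.toLinearMap =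
      (TensorProduct.map LinearMap.id η.toLinearMap) ∘ₗ Coalgebra.comul)
    (hμ : (Coalgebra.comul (R := k) (A := A)) ∘ₗ μ.toLinearMap =
      (TensorProduct.map μ.toLinearMap LinearMap.id) ∘ₗ Coalgebra.comul) :
    ⁅η, μ⁆ = 0 := by
  have hinj : Function.Injective (Coalgebra.comul (R := k) (A := A)) := by
    intro x y h
    have h2 := congrArg ((Coalgebra.counit (R := k) (A := A)).rTensor A) h
    rw [Coalgebra.rTensor_counit_comul, Coalgebra.rTensor_counit_comul] at h2
    have := congrArg (TensorProduct.lid k A) h2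
    simpa using this
  ext a
  apply hinj
  have h1 : (Coalgebra.comul (R := k) (A := A)) (η (μ a)) =
      TensorProduct.map μ.toLinearMap η.toLinearMap (Coalgebra.comul a) := by
    have e1 := LinearMap.congr_fun hη (μ a)
    have e2 := LinearMap.congr_fun hμ a
    simp only [LinearMap.comp_apply] at e1 e2
    simp only [Derivation.coeFn_coe] at e1 e2
    rw [e1, e2, ← LinearMap.comp_apply, ← TensorProduct.map_comp]
    simp
  have h2 : (Coalgebra.comul (R := k) (A := A)) (μ (η a)) =
      TensorProduct.map μ.toLinearMap η.toLinearMap (Coalgebra.comul a) := by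
    have e1 := LinearMap.congr_fun hμ (η a)
    have e2 := LinearMap.congr_fun hη a
    simp only [LinearMap.comp_apply] at e1 e2
    simp only [Derivation.coeFn_coe] at e1 e2
    rw [e1, e2, ← LinearMap.comp_apply, ← TensorProduct.map_comp]
    simp
  simp [Derivation.commutator_apply, map_sub, h1, h2]
end
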